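/- Let m ≥ 1 and let x_1, …, x_m be invertible indeterminates. For α ∈ ℤ^m define the m×m matrices M and N by M_{i,1} = x_i^{α_i−i+1} and M_{i,j} = x_i^{α_i−i+j} + x_i^{α_i−i−j+2} for 2 ≤ j ≤ m, and N_{i,j} = x_i^{α_i−i+j} − x_i^{α_i−i−j} for 1 ≤ i, j ≤ m. Then in the Laurent polynomial ring ℤ[x_1^{±1}, …, x_m^{±1}] one has det M = ∏_{1≤i<j≤m}(1 − x_i/x_j) · ∏_{1≤r<s≤m}(1 − 1/(x_r x_s)) · x^α and det N = ∏_{1≤i<j≤m}(1 − x_i/x_j) · ∏_{1≤r≤s≤m}(1 − 1/(x_r x_s)) · x^α. -/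

import Mathlib

open scoped BigOperators

noncomputable section

/-- Integral weights of rank `m`, identified with `ℤ^m`. -/
abbrev Wt (m : ℕ) := Fin m → ℤ

/-- Rational weights of rank `m` (needed for the half-integral `ρ` of type `B`). -/
abbrev QWt (m : ℕ) := Fin m → ℚ

/-- Coercion of an integral weight to a rational weight. -/
def castWt {m : ℕ} (β : Wt m) : QWt m := fun i => (β i : ℚ)

/-- The standard basis vector `ε_i` of `ℤ^m`. -/
def eps {m : ℕ} (i : Fin m) : Wt m := fun j => if j = i then 1 else 0

/-- `ρ_m = (m, m-1, ..., 1)`. -/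
def rhoZ (m : ℕ) : Wt m := fun i => (m : ℤ) - (i : ℕ)

/-- `κ_m = (1, ..., 1)`. -/
def kappa (m : ℕ) : Wt m := fun _ => 1

/-- A partition of length `m`: a weakly decreasing element of `ℕ^m` (written in `ℤ^m`). -/
def IsPart {m : ℕ} (lam : Wt m) : Prop := Antitone lam ∧ ∀ i, 0 ≤ lam i

/-- `|λ| = λ_1 + ⋯ + λ_m`. -/
def wtSum {m : ℕ} (lam : Wt m) : ℤ := ∑ i, lam i

/-- The conjugate partition, regarded as a partition of length `n`:
`λ'_j = #{i : λ_i ≥ j}` (with `j` one-based). -/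
def conj {m : ℕ} (n : ℕ) (lam : Wt m) : Wt n :=
  fun j => ((Finset.univ.filter (fun i : Fin m => ((j : ℕ) : ℤ) < lam i)).card : ℤ)

/-- The permutation action of `S_m` on `ℤ^m`. -/
def pact {m : ℕ} (σ : Equiv.Perm (Fin m)) (β : Wt m) : Wt m := β ∘ σ.symm

/-- The permutation action of `S_m` on `ℚ^m`. -/
def qpact {m : ℕ} (σ : Equiv.Perm (Fin m)) (β : QWt m) : QWt m := β ∘ σ.symm

/-- The dot action `σ ∘ α = σ(α + ρ_m) - ρ_m`. -/
def dotAct {m : ℕ} (σ : Equiv.Perm (Fin m)) (α : Wt m) : Wt m :=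
  pact σ (α + rhoZ m) - rhoZ m

/-- The three root-system types considered in the paper. -/
inductive RT | B | C | D
deriving DecidableEq

/-- The action of a signed permutation `(σ, ε)` on `ℚ^m`: the hyperoctahedral group
`W_{B_m} = W_{C_m}` consists of all such pairs. -/
def sact {m : ℕ} (σ : Equiv.Perm (Fin m)) (ε : Fin m → Bool) (β : QWt m) : QWt m :=
  fun i => (if ε i then -1 else 1) * β (σ.symm i)

/-- `(-1)^{l(w)}` for a signed permutation `w = (σ, ε)`: the sign character of the
hyperoctahedral group, which takes value `-1` on each Coxeter generator. -/
def ssign {m : ℕ} (σ : Equiv.Perm (Fin m)) (ε : Fin m → Bool) : ℤ :=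
  (Equiv.Perm.sign σ : ℤ) * ∏ i, (if ε i then -1 else 1)

/-- Which signed permutations belong to the Weyl group of type `g`: for `B` and `C` all of
them, for `D` only those changing an even number of signs. -/
def allowed (g : RT) {m : ℕ} (ε : Fin m → Bool) : Prop :=
  g = RT.D → (∏ i, (if ε i then (-1 : ℤ) else 1)) = 1

instance (g : RT) {m : ℕ} : DecidablePred (allowed g (m := m)) := by
  unfold allowed; infer_instance

/-- The Laurent polynomial ring `ℤ[x_1^{±1/2}, ..., x_m^{±1/2}]` (allowing all rational
exponents), realized as the group algebra of `ℚ^m`. -/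
abbrev LQ (m : ℕ) := AddMonoidAlgebra ℤ (QWt m)

/-- The monomial `x^β`. -/
def XQ {m : ℕ} (β : QWt m) : LQ m := AddMonoidAlgebra.single β 1

instance {m : ℕ} : IsDomain (LQ m) := NoZeroDivisors.to_isDomain _

/-- The fraction field of the Laurent polynomial ring, in which Schur functions live. -/
abbrev KK (m : ℕ) := FractionRing (LQ m)

def toK {m : ℕ} (p : LQ m) : KK m := algebraMap (LQ m) (KK m) p

/-- The half-sum of positive roots: `ρ_B = ρ_m - (1/2,…,1/2)`, `ρ_C = ρ_m`,
`ρ_D = ρ_m - (1,…,1)`. -/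
def rhoG (g : RT) (m : ℕ) : QWt m :=
  match g with
  | RT.B => fun i => ((m : ℚ) - (i : ℕ)) - 1/2
  | RT.C => fun i => (m : ℚ) - (i : ℕ)
  | RT.D => fun i => ((m : ℚ) - (i : ℕ)) - 1

/-- `a_β = Σ_{w ∈ W_g} (-1)^{l(w)} x^{w(β)}`. -/
def aalt (g : RT) {m : ℕ} (β : QWt m) : LQ m :=
  ∑ σ : Equiv.Perm (Fin m), ∑ ε ∈ Finset.univ.filter (allowed g),
    ssign σ ε • XQ (sact σ ε β)

/-- The Schur function `s_ν^g = a_{ν+ρ_g} / a_{ρ_g}`. -/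
def SchurF (g : RT) {m : ℕ} (ν : QWt m) : KK m :=
  toK (aalt g (ν + rhoG g m)) / toK (aalt g (rhoG g m))

/-- The one-row weight `(k, 0, …, 0)`. -/
def rowWt (m : ℕ) (k : ℤ) : QWt m := fun i => if (i : ℕ) = 0 then (k : ℚ) else 0

/-- The one-column weight `(1^p, 0^{m-p})`. -/
def colWt (m : ℕ) (p : ℤ) : QWt m := fun i => if ((i : ℕ) : ℤ) < p then 1 else 0

/-- `h_k^g = s_{(k,0,…,0)}^g` for `k ≥ 0`, and `0` for `k < 0`. -/
def hF (g : RT) (m : ℕ) (k : ℤ) : KK m := if 0 ≤ k then SchurF g (rowWt m k) else 0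

/-- `H_k^g = h_k^g + h_{k-2}^g + ⋯ + h_{k mod 2}^g` for `k ≥ 0`, and `0` for `k < 0`. -/
def HF (g : RT) (m : ℕ) (k : ℤ) : KK m :=
  if 0 ≤ k then ∑ j ∈ Finset.range (k.toNat / 2 + 1), hF g m (k - 2 * j) else 0

/-- `e_p^g = s^g_{(1^p,0^{m-p})}` for `0 ≤ p ≤ m`, `e_p^g = e^g_{2m-p}` for `m < p ≤ 2m`,
and `0` otherwise. -/
def eF (g : RT) (m : ℕ) (p : ℤ) : KK m :=
  if 0 ≤ p ∧ p ≤ (m : ℤ) then SchurF g (colWt m p)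
  else if (m : ℤ) < p ∧ p ≤ 2 * m then SchurF g (colWt m (2 * m - p))
  else 0

/-- `E_k^g = e_k^g + e_{k-2}^g + ⋯ + e_{k mod 2}^g` for `k ≥ 0`, and `0` for `k < 0`. -/
def EF (g : RT) (m : ℕ) (k : ℤ) : KK m :=
  if 0 ≤ k then ∑ j ∈ Finset.range (k.toNat / 2 + 1), eF g m (k - 2 * j) else 0

/-- The `m × m` determinant `u_α^g` (in the one-row characters `h^g`). -/
def uDet (g : RT) {m : ℕ} (α : Wt m) : KK m :=
  Matrix.det (Matrix.of fun i j : Fin m =>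
    if (j : ℕ) = 0 then hF g m (α i - (i : ℕ))
    else hF g m (α i - (i : ℕ) + (j : ℕ)) + hF g m (α i - (i : ℕ) - (j : ℕ)))

/-- The `n × n` determinant `v_β^g` (in the one-column characters `e^g` of rank `m`). -/
def vDet (g : RT) (m : ℕ) {n : ℕ} (β : Wt n) : KK m :=
  Matrix.det (Matrix.of fun i j : Fin n =>
    if (j : ℕ) = 0 then eF g m (β i - (i : ℕ))
    else eF g m (β i - (i : ℕ) + (j : ℕ)) + eF g m (β i - (i : ℕ) - (j : ℕ)))

/-- `h_α^g = h^g_{α_1} ⋯ h^g_{α_m}` (and similarly for arbitrary index length). -/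
def hProd (g : RT) (m : ℕ) {n : ℕ} (α : Wt n) : KK m := ∏ i, hF g m (α i)

def HProd (g : RT) (m : ℕ) {n : ℕ} (α : Wt n) : KK m := ∏ i, HF g m (α i)

def eProd (g : RT) (m : ℕ) {n : ℕ} (α : Wt n) : KK m := ∏ i, eF g m (α i)

def EProd (g : RT) (m : ℕ) {n : ℕ} (α : Wt n) : KK m := ∏ i, EF g m (α i)

/-- The Laurent polynomial ring `ℤ[x_1^{±1}, ..., x_m^{±1}]`, realized as the group
algebra of `ℤ^m`. -/
abbrev LZ (m : ℕ) := AddMonoidAlgebra ℤ (Wt m)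

/-- The monomial `x^β`. -/
def XZ {m : ℕ} (β : Wt m) : LZ m := AddMonoidAlgebra.single β 1

/-- `φ_m = ∏_{1≤i<j≤m} (1 - x_i/x_j) · ∏_{1≤r<s≤m} (1 - 1/(x_r x_s))`; its coefficients
are the function `a` (resp. `f_{q=1}` up to expansion conventions). -/
def phiSmall (m : ℕ) : LZ m :=
  (∏ p ∈ Finset.univ.filter (fun p : Fin m × Fin m => p.1 < p.2),
      (1 - XZ (eps p.1 - eps p.2))) *
  (∏ p ∈ Finset.univ.filter (fun p : Fin m × Fin m => p.1 < p.2),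
      (1 - XZ (-(eps p.1 + eps p.2))))

/-- `Φ_m = ∏_{1≤i<j≤m} (1 - x_i/x_j) · ∏_{1≤r≤s≤m} (1 - 1/(x_r x_s))`. -/
def phiBig (m : ℕ) : LZ m :=
  (∏ p ∈ Finset.univ.filter (fun p : Fin m × Fin m => p.1 < p.2),
      (1 - XZ (eps p.1 - eps p.2))) *
  (∏ p ∈ Finset.univ.filter (fun p : Fin m × Fin m => p.1 ≤ p.2),
      (1 - XZ (-(eps p.1 + eps p.2))))

/-- The coefficient `a(γ)` of `x^γ` in `φ_m`. -/
def coeffSmall (m : ℕ) (γ : Wt m) : ℤ := (phiSmall m).coeff γ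

/-- The coefficient `A(γ)` of `x^γ` in `Φ_m`. -/
def coeffBig (m : ℕ) (γ : Wt m) : ℤ := (phiBig m).coeff γ

/-- The generic `q`-partition function attached to a finite family `v` of vectors:
the coefficient of `q^d` counts the families `(n_i)` of nonnegative integers with
`Σ n_i = d` and `Σ n_i v_i = β`.  This encodes the coefficient of `x^β` in the formal
series expansion of `∏_i (1 - q x^{v_i})^{-1}` as a power series in `q`. -/
def PqPS {m : ℕ} {ι : Type} [Fintype ι] (v : ι → Wt m) (β : QWt m) : PowerSeries ℤ :=
  PowerSeries.mk fun d =>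
    (Nat.card {n : ι → ℕ // (∑ i, n i) = d ∧ castWt (∑ i, (n i : ℤ) • v i) = β} : ℤ)

/-- The specialization at `q = 1` of `PqPS`: the number of ways to write `β` as a
nonnegative integral combination of the vectors `v_i`. -/
def POne {m : ℕ} {ι : Type} [Fintype ι] (v : ι → Wt m) (β : Wt m) : ℤ :=
  (Nat.card {n : ι → ℕ // (∑ i, (n i : ℤ) • v i) = β} : ℤ)

/-- Index type for the pairs `1 ≤ i < j ≤ m`. -/
abbrev IdxLT (m : ℕ) := {p : Fin m × Fin m // p.1 < p.2}

/-- Index type for the pairs `1 ≤ i ≤ j ≤ m`. -/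
abbrev IdxLE (m : ℕ) := {p : Fin m × Fin m // p.1 ≤ p.2}

/-- The positive roots `ε_i - ε_j` (`i < j`) of type `A_m`. -/
def rootsA (m : ℕ) : IdxLT m → Wt m := fun p => eps p.1.1 - eps p.1.2

/-- The positive roots of type `B_m`. -/
def rootsB (m : ℕ) : IdxLT m ⊕ IdxLT m ⊕ Fin m → Wt m
  | .inl p => eps p.1.1 - eps p.1.2
  | .inr (.inl p) => eps p.1.1 + eps p.1.2
  | .inr (.inr i) => eps i

/-- The positive roots of type `C_m` (note `2ε_i = ε_i + ε_i`). -/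
def rootsC (m : ℕ) : IdxLT m ⊕ IdxLE m → Wt m
  | .inl p => eps p.1.1 - eps p.1.2
  | .inr p => eps p.1.1 + eps p.1.2

/-- The positive roots of type `D_m`. -/
def rootsD (m : ℕ) : IdxLT m ⊕ IdxLT m → Wt m
  | .inl p => eps p.1.1 - eps p.1.2
  | .inr p => eps p.1.1 + eps p.1.2

/-- The vectors `ε_i - ε_j` (`i < j`) and `-(ε_r + ε_s)` (`r < s`), whose `q`-partition
function is `f_q`. -/
def vfSmall (m : ℕ) : IdxLT m ⊕ IdxLT m → Wt m
  | .inl p => eps p.1.1 - eps p.1.2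
  | .inr p => -(eps p.1.1 + eps p.1.2)

/-- The vectors `ε_i - ε_j` (`i < j`) and `-(ε_r + ε_s)` (`r ≤ s`), whose `q`-partition
function is `F_q`. -/
def vfBig (m : ℕ) : IdxLT m ⊕ IdxLE m → Wt m
  | .inl p => eps p.1.1 - eps p.1.2
  | .inr p => -(eps p.1.1 + eps p.1.2)

/-- `f_q`. -/
def fq {m : ℕ} (β : Wt m) : PowerSeries ℤ := PqPS (vfSmall m) (castWt β)

/-- `F_q`. -/
def Fq {m : ℕ} (β : Wt m) : PowerSeries ℤ := PqPS (vfBig m) (castWt β)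

/-- The `q`-analogue of Kostant's partition function, type `A_m`. -/
def PqA {m : ℕ} (β : QWt m) : PowerSeries ℤ := PqPS (rootsA m) β

/-- The `q`-analogue of Kostant's partition function, types `B_m`, `C_m`, `D_m`. -/
def PqG (g : RT) {m : ℕ} (β : QWt m) : PowerSeries ℤ :=
  match g with
  | RT.B => PqPS (rootsB m) β
  | RT.C => PqPS (rootsC m) β
  | RT.D => PqPS (rootsD m) β

/-- The Kostka–Foulkes polynomial
`K^g_{λ,μ}(q) = Σ_{w ∈ W_g} (-1)^{l(w)} P_q^g(w(λ+ρ_g) - (μ+ρ_g))`. -/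
def KF (g : RT) {m : ℕ} (lam mu : QWt m) : PowerSeries ℤ :=
  ∑ σ : Equiv.Perm (Fin m), ∑ ε ∈ Finset.univ.filter (allowed g),
    ssign σ ε • PqG g (sact σ ε (lam + rhoG g m) - (mu + rhoG g m))

/-- The Kostka–Foulkes polynomial of type `A_m`,
`K^{A_m}_{λ,γ}(q) = Σ_{σ ∈ S_m} (-1)^{l(σ)} P_q^{A_m}(σ(λ+ρ_m) - (γ+ρ_m))`,
defined for arbitrary `γ ∈ ℤ^m`. -/
def KFA {m : ℕ} (lam gamma : Wt m) : PowerSeries ℤ :=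
  ∑ σ : Equiv.Perm (Fin m),
    (Equiv.Perm.sign σ : ℤ) • PqA (castWt (pact σ (lam + rhoZ m) - (gamma + rhoZ m)))

/-- `u_{λ,μ}(q) = Σ_{σ ∈ S_m} (-1)^{l(σ)} f_q(σ(λ+ρ_m) - μ - ρ_m)`. -/
def uP {m : ℕ} (lam mu : Wt m) : PowerSeries ℤ :=
  ∑ σ : Equiv.Perm (Fin m),
    (Equiv.Perm.sign σ : ℤ) • fq (pact σ (lam + rhoZ m) - mu - rhoZ m)

/-- `U_{λ,μ}(q) = Σ_{σ ∈ S_m} (-1)^{l(σ)} F_q(σ(λ+ρ_m) - μ - ρ_m)`. -/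
def UP {m : ℕ} (lam mu : Wt m) : PowerSeries ℤ :=
  ∑ σ : Equiv.Perm (Fin m),
    (Equiv.Perm.sign σ : ℤ) • Fq (pact σ (lam + rhoZ m) - mu - rhoZ m)

/-- `f_q` specialized at `q = 1`. -/
def fOne {m : ℕ} (β : Wt m) : ℤ := POne (vfSmall m) β

/-- `F_q` specialized at `q = 1`. -/
def FOne {m : ℕ} (β : Wt m) : ℤ := POne (vfBig m) β

/-- `u_{λ,μ}(1)`. -/
def uP1 {m : ℕ} (lam mu : Wt m) : ℤ :=
  ∑ σ : Equiv.Perm (Fin m),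
    (Equiv.Perm.sign σ : ℤ) * fOne (pact σ (lam + rhoZ m) - mu - rhoZ m)

/-- `U_{λ,μ}(1)`. -/
def UP1 {m : ℕ} (lam mu : Wt m) : ℤ :=
  ∑ σ : Equiv.Perm (Fin m),
    (Equiv.Perm.sign σ : ℤ) * FOne (pact σ (lam + rhoZ m) - mu - rhoZ m)

/-- `λ̂ = (n - λ_m, …, n - λ_1)`. -/
def hatP {m : ℕ} (n : ℤ) (lam : Wt m) : Wt m := fun i => n - lam i.rev

/-- The involution `I(α_1, …, α_m) = (-α_m, …, -α_1)`. -/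
def invI {m : ℕ} (α : Wt m) : Wt m := fun i => -α i.rev

/-- `σ*`, defined by `σ*(k) = σ(m - k + 1)`. -/
def starPerm {m : ℕ} (σ : Equiv.Perm (Fin m)) : Equiv.Perm (Fin m) :=
  (Fin.revPerm).trans σ

/-- The number of ways to write `β = Σ_{1≤r≤s≤m} e_{r,s} (ε_r + ε_s)`, `e_{r,s} ∈ ℕ`. -/
def cC (m : ℕ) (β : Wt m) : ℕ :=
  Nat.card {e : IdxLE m → ℕ // (∑ p, (e p : ℤ) • (eps p.1.1 + eps p.1.2)) = β}

/-- The number of ways to write `β = Σ_{1≤r<s≤m} e_{r,s} (ε_r + ε_s)`, `e_{r,s} ∈ ℕ`. -/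
def cD (m : ℕ) (β : Wt m) : ℕ :=
  Nat.card {e : IdxLT m → ℕ // (∑ p, (e p : ℤ) • (eps p.1.1 + eps p.1.2)) = β}

/-- The set `C_k^m`. -/
def setC (m k : ℕ) : Set (Wt m) :=
  {β | (∃ e : IdxLE m → ℕ, (∑ p, (e p : ℤ) • (eps p.1.1 + eps p.1.2)) = β) ∧
       wtSum β = 2 * k}

/-- The set `D_k^m`. -/
def setD (m k : ℕ) : Set (Wt m) :=
  {β | (∃ e : IdxLT m → ℕ, (∑ p, (e p : ℤ) • (eps p.1.1 + eps p.1.2)) = β) ∧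
       wtSum β = 2 * k}


/-!
After dividing row `i` by `x_i^{α_i - i}` (resp. `x_i^{α_i - i - 1}`), the entries become
`x_i^j + x_i^{-j}` (resp. `x_i^{j+1} - x_i^{-j-1}`). With `v_i = x_i + x_i⁻¹` these are the
monic Dickson polynomials `D_j(v_i, 1)` (resp. `(x_i - x_i⁻¹) E_j(v_i, 1)`) of degree `j`, so
both determinants reduce to the Vandermonde determinant `∏_{i<j} (v_j - v_i)`. Finally
`v_j - v_i = (1 - x_i/x_j)(1 - 1/(x_i x_j)) x_j` and `x_i - x_i⁻¹ = (1 - 1/x_i²) x_i`, and the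
leftover monomials multiply to `x^α`.
-/

open Polynomial

namespace Polynomial
variable {R : Type*} [CommRing R]

theorem natDegree_dickson_zero (k : ℕ) (a : R) : (dickson k a 0).natDegree = 0 := by
  rw [dickson_zero, show (3 - k : R[X]) = C (3 - k : R) by simp [map_ofNat C], natDegree_C]

theorem monic_dickson_and_natDegree [Nontrivial R] (k : ℕ) (a : R) :
    ∀ {n : ℕ}, n ≠ 0 → (dickson k a n).Monic ∧ (dickson k a n).natDegree = n
  | 1, _ => ⟨by simp [dickson_one, monic_X], by simp [dickson_one]⟩
  | n + 2, _ => by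
    obtain ⟨hmon, hdeg⟩ := monic_dickson_and_natDegree k a n.succ_ne_zero
    have hlead : (X * dickson k a (n + 1)).Monic := monic_X.mul hmon
    have hlead_deg : (X * dickson k a (n + 1)).natDegree = n + 2 := by
      rw [monic_X.natDegree_mul hmon, natDegree_X, hdeg, add_comm]
    have hlow : (C a * dickson k a n).natDegree < n + 2 := by
      refine (natDegree_C_mul_le _ _).trans_lt ?_
      rcases n.eq_zero_or_pos with rfl | hn
      · rw [natDegree_dickson_zero]; omega
      · rw [(monic_dickson_and_natDegree k a hn.ne').2]; omega
    rw [dickson_add_two]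
    refine ⟨hlead.sub_of_left ?_, ?_⟩
    · exact degree_lt_degree (hlead_deg ▸ hlow)
    · rw [natDegree_sub_eq_left_of_natDegree_lt (hlead_deg ▸ hlow), hlead_deg]

theorem dickson_two_one_eval_add_inv {x y : R} (h : x * y = 1) :
    ∀ n : ℕ, (x - y) * (dickson 2 (1 : R) n).eval (x + y) = x ^ (n + 1) - y ^ (n + 1)
  | 0 => by simp [dickson_zero]; norm_num
  | 1 => by simp only [dickson_one, eval_X]; ring
  | n + 2 => by
    have h1 := dickson_two_one_eval_add_inv h n
    have h2 := dickson_two_one_eval_add_inv h (n + 1)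
    simp only [dickson_add_two, eval_sub, eval_mul, eval_X, eval_C, one_mul] at *
    linear_combination (x + y) * h2 - h1 + (x ^ (n + 1) - y ^ (n + 1)) * h

end Polynomial

namespace Matrix
variable {R : Type*} [CommRing R] [Nontrivial R] {m : ℕ} {x y : Fin m → R}

theorem det_eval_dickson_eq_prod (k : ℕ) (a : R) (v : Fin m → R)
    (f : Fin m → R[X]) (hf₀ : ∀ j : Fin m, (j : ℕ) = 0 → f j = 1)
    (hf : ∀ j : Fin m, (j : ℕ) ≠ 0 → f j = dickson k a j) :
    (of fun i j => (f j).eval (v i)).det = ∏ i, ∏ j ∈ Finset.Ioi i, (v j - v i) := by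
  rw [← det_eval_matrixOfPolynomials_eq_det_vandermonde, det_vandermonde]
  · intro j
    by_cases hj : (j : ℕ) = 0
    · simp [hf₀ j hj, hj]
    · rw [hf j hj, (monic_dickson_and_natDegree k a hj).2]
  · intro j
    by_cases hj : (j : ℕ) = 0
    · simp [hf₀ j hj]
    · rw [hf j hj]; exact (monic_dickson_and_natDegree k a hj).1

theorem det_pow_add_pow (hxy : ∀ i, x i * y i = 1) :
    (of fun i j : Fin m =>
        if (j : ℕ) = 0 then (1 : R) else x i ^ (j : ℕ) + y i ^ (j : ℕ)).det =
      ∏ i, ∏ j ∈ Finset.Ioi i, ((x j + y j) - (x i + y i)) := by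
  rw [← det_eval_dickson_eq_prod 1 1 (fun i => x i + y i)
    (fun j => if (j : ℕ) = 0 then 1 else dickson 1 1 j) (fun j hj => if_pos hj)
    (fun j hj => if_neg hj)]
  congr 1; ext i j
  simp only [of_apply]
  split_ifs <;> simp [dickson_one_one_eval_add_inv _ _ (hxy i)]

theorem det_pow_sub_pow (hxy : ∀ i, x i * y i = 1) :
    (of fun i j : Fin m => x i ^ ((j : ℕ) + 1) - y i ^ ((j : ℕ) + 1)).det =
      (∏ i, (x i - y i)) * ∏ i, ∏ j ∈ Finset.Ioi i, ((x j + y j) - (x i + y i)) := by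
  rw [← det_eval_dickson_eq_prod 2 1 (fun i => x i + y i) (fun j => dickson 2 1 j)
    (fun j hj => by simp [hj, dickson_zero]; norm_num) (fun _ _ => rfl), ← det_mul_column]
  congr 1; ext i j
  simp [dickson_two_one_eval_add_inv (hxy i)]

end Matrix

theorem prod_filter_fst_lt {ι M : Type*} [Fintype ι] [LinearOrder ι] [LocallyFiniteOrderTop ι]
    [CommMonoid M] (f : ι × ι → M) :
    ∏ p ∈ Finset.univ.filter (fun p : ι × ι => p.1 < p.2), f p =
      ∏ i, ∏ j ∈ Finset.Ioi i, f (i, j) := by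
  rw [Finset.prod_filter, Fintype.prod_prod_type]
  refine Finset.prod_congr rfl fun i _ => ?_
  rw [← Finset.prod_filter, Finset.filter_lt_eq_Ioi]

theorem prod_filter_fst_le {ι M : Type*} [Fintype ι] [LinearOrder ι] [LocallyFiniteOrderTop ι]
    [CommMonoid M] (f : ι × ι → M) :
    ∏ p ∈ Finset.univ.filter (fun p : ι × ι => p.1 ≤ p.2), f p =
      ∏ i, ∏ j ∈ Finset.Ici i, f (i, j) := by
  rw [Finset.prod_filter, Fintype.prod_prod_type]
  refine Finset.prod_congr rfl fun i _ => ?_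
  rw [← Finset.prod_filter, Finset.filter_le_eq_Ici]

theorem Fin.prod_prod_Ioi_eq_prod_pow {M : Type*} [CommMonoid M] {m : ℕ} (g : Fin m → M) :
    ∏ i, ∏ j ∈ Finset.Ioi i, g j = ∏ j, g j ^ (j : ℕ) := by
  rw [Finset.prod_comm' (t' := Finset.univ) (s' := Finset.Iio) (by simp)]
  simp

theorem add_sub_add_eq_of_mul_eq_one {R : Type*} [CommRing R] {a b c d : R}
    (hab : a * b = 1) (hcd : c * d = 1) :
    (c + d) - (a + b) = (1 - a * d) * (1 - b * d) * c := by
  linear_combination (a + b - a * b * d) * hcd - d * hab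

section Laurent
variable {m : ℕ}

theorem XZ_zero : XZ (0 : Wt m) = 1 := rfl

theorem XZ_add (β γ : Wt m) : XZ (β + γ) = XZ β * XZ γ := by
  simp [XZ, AddMonoidAlgebra.single_mul_single]

theorem XZ_mul_XZ_neg (β : Wt m) : XZ β * XZ (-β) = 1 := by
  rw [← XZ_add, add_neg_cancel, XZ_zero]

theorem XZ_nsmul (n : ℕ) (β : Wt m) : XZ (n • β) = XZ β ^ n := by
  simp [XZ, AddMonoidAlgebra.single_pow]

theorem XZ_sum {ι : Type*} (s : Finset ι) (f : ι → Wt m) :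
    XZ (∑ i ∈ s, f i) = ∏ i ∈ s, XZ (f i) :=
  map_prod (AddMonoidAlgebra.of ℤ (Wt m)) (fun i => Multiplicative.ofAdd (f i)) s

theorem XZ_eq_prod (β : Wt m) : XZ β = ∏ i, XZ (β i • eps i) := by
  rw [← XZ_sum]
  congr 1
  ext k
  simp [eps]

theorem XZ_add_natCast_smul (c : ℤ) (n : ℕ) (β : Wt m) :
    XZ ((c + n) • β) = XZ (c • β) * XZ β ^ n := by
  rw [add_smul, XZ_add, natCast_zsmul, XZ_nsmul]

theorem XZ_sub_natCast_smul (c : ℤ) (n : ℕ) (β : Wt m) :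
    XZ ((c - n) • β) = XZ (c • β) * XZ (-β) ^ n := by
  rw [sub_smul, sub_eq_add_neg, XZ_add, ← smul_neg, natCast_zsmul, XZ_nsmul]

theorem XZ_eps_add_sub (i j : Fin m) :
    (XZ (eps j) + XZ (-eps j)) - (XZ (eps i) + XZ (-eps i)) =
      (1 - XZ (eps i - eps j)) * (1 - XZ (-(eps i + eps j))) * XZ (eps j) := by
  rw [sub_eq_add_neg (eps i), neg_add (eps i), XZ_add, XZ_add]
  exact add_sub_add_eq_of_mul_eq_one (XZ_mul_XZ_neg _) (XZ_mul_XZ_neg _)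

theorem XZ_eps_sub (i : Fin m) :
    XZ (eps i) - XZ (-eps i) = (1 - XZ (-(eps i + eps i))) * XZ (eps i) := by
  rw [neg_add, XZ_add]
  linear_combination XZ (-eps i) * XZ_mul_XZ_neg (eps i)

theorem prod_Ioi_XZ_sub_eq_phiSmall_mul :
    ∏ i, ∏ j ∈ Finset.Ioi i, ((XZ (eps j) + XZ (-eps j)) - (XZ (eps i) + XZ (-eps i))) =
      phiSmall m * ∏ i : Fin m, XZ (eps i) ^ (i : ℕ) := by
  simp_rw [XZ_eps_add_sub, Finset.prod_mul_distrib, Fin.prod_prod_Ioi_eq_prod_pow]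
  rw [phiSmall, prod_filter_fst_lt, prod_filter_fst_lt]

theorem prod_XZ_sub_mul_prod_Ioi_eq_phiBig_mul :
    (∏ i, (XZ (eps i) - XZ (-eps i))) *
        ∏ i, ∏ j ∈ Finset.Ioi i, ((XZ (eps j) + XZ (-eps j)) - (XZ (eps i) + XZ (-eps i))) =
      phiBig m * ∏ i : Fin m, XZ (eps i) ^ ((i : ℕ) + 1) := by
  simp_rw [prod_Ioi_XZ_sub_eq_phiSmall_mul, XZ_eps_sub, phiBig, phiSmall, prod_filter_fst_le,
    prod_filter_fst_lt, ← Finset.mul_prod_Ioi_eq_prod_Ici, pow_succ, Finset.prod_mul_distrib]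
  ring

theorem prod_XZ_smul_mul_pow (c : Wt m) (n : Fin m → ℕ) :
    ∏ i, XZ (c i • eps i) * XZ (eps i) ^ n i = XZ (c + fun i => (n i : ℤ)) := by
  simp_rw [← XZ_add_natCast_smul, XZ_eq_prod (c + _), Pi.add_apply]

theorem det_xpow_add_xpow (α : Wt m) :
    Matrix.det (Matrix.of fun i j : Fin m =>
        if (j : ℕ) = 0 then XZ ((α i - (i : ℕ)) • eps i)
        else XZ ((α i - (i : ℕ) + (j : ℕ)) • eps i) +
          XZ ((α i - (i : ℕ) - (j : ℕ)) • eps i)) =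
      phiSmall m * XZ α := by
  have hrow : (Matrix.of fun i j : Fin m =>
        if (j : ℕ) = 0 then XZ ((α i - (i : ℕ)) • eps i)
        else XZ ((α i - (i : ℕ) + (j : ℕ)) • eps i) +
          XZ ((α i - (i : ℕ) - (j : ℕ)) • eps i)) =
      Matrix.of fun i j => XZ ((α i - (i : ℕ)) • eps i) *
        Matrix.of (fun i j : Fin m => if (j : ℕ) = 0 then 1
          else XZ (eps i) ^ (j : ℕ) + XZ (-eps i) ^ (j : ℕ)) i j := by
    refine Matrix.ext fun i j => ?_
    simp only [Matrix.of_apply, mul_ite, mul_one, mul_add, XZ_add_natCast_smul,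
      XZ_sub_natCast_smul]
  rw [hrow, Matrix.det_mul_column, Matrix.det_pow_add_pow (fun i => XZ_mul_XZ_neg (eps i)),
    prod_Ioi_XZ_sub_eq_phiSmall_mul, mul_left_comm, ← Finset.prod_mul_distrib,
    prod_XZ_smul_mul_pow]
  congr 2
  ext i
  simp

theorem det_xpow_sub_xpow (α : Wt m) :
    Matrix.det (Matrix.of fun i j : Fin m =>
        XZ ((α i - (i : ℕ) + (j : ℕ)) • eps i) -
          XZ ((α i - (i : ℕ) - (j : ℕ) - 2) • eps i)) =
      phiBig m * XZ α := by
  have hrow : (Matrix.of fun i j : Fin m =>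
        XZ ((α i - (i : ℕ) + (j : ℕ)) • eps i) -
          XZ ((α i - (i : ℕ) - (j : ℕ) - 2) • eps i)) =
      Matrix.of fun i j => XZ ((α i - (i : ℕ) - 1) • eps i) *
        Matrix.of (fun i j : Fin m =>
          XZ (eps i) ^ ((j : ℕ) + 1) - XZ (-eps i) ^ ((j : ℕ) + 1)) i j := by
    refine Matrix.ext fun i j => ?_
    simp only [Matrix.of_apply]
    rw [mul_sub, ← XZ_add_natCast_smul, ← XZ_sub_natCast_smul]
    congr 3 <;> push_cast <;> ring
  rw [hrow, Matrix.det_mul_column, Matrix.det_pow_sub_pow (fun i => XZ_mul_XZ_neg (eps i)),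
    prod_XZ_sub_mul_prod_Ioi_eq_phiBig_mul, mul_left_comm, ← Finset.prod_mul_distrib,
    prod_XZ_smul_mul_pow]
  congr 2
  ext i
  simp

end Laurent

theorem stmt0_general (m : ℕ) (α : Wt m) :
    (Matrix.det (Matrix.of fun i j : Fin m =>
        if (j : ℕ) = 0 then XZ ((α i - (i : ℕ)) • eps i)
        else XZ ((α i - (i : ℕ) + (j : ℕ)) • eps i) +
             XZ ((α i - (i : ℕ) - (j : ℕ)) • eps i)) =
      phiSmall m * XZ α) ∧
    (Matrix.det (Matrix.of fun i j : Fin m =>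
        XZ ((α i - (i : ℕ) + (j : ℕ)) • eps i) -
        XZ ((α i - (i : ℕ) - (j : ℕ) - 2) • eps i)) =
      phiBig m * XZ α) :=
  ⟨det_xpow_add_xpow α, det_xpow_sub_xpow α⟩

/-- The two determinantal factorizations `det M = φ_m · x^α` and
`det N = Φ_m · x^α` in the Laurent polynomial ring `ℤ[x_1^{±1}, …, x_m^{±1}]`.
Here `x_i^a` is the monomial `XZ (a • eps i)`. -/
theorem stmt0 (m : ℕ) (hm : 1 ≤ m) (α : Wt m) :
    (Matrix.det (Matrix.of fun i j : Fin m =>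
        if (j : ℕ) = 0 then XZ ((α i - (i : ℕ)) • eps i)
        else XZ ((α i - (i : ℕ) + (j : ℕ)) • eps i) +
             XZ ((α i - (i : ℕ) - (j : ℕ)) • eps i)) =
      phiSmall m * XZ α) ∧
    (Matrix.det (Matrix.of fun i j : Fin m =>
        XZ ((α i - (i : ℕ) + (j : ℕ)) • eps i) -
        XZ ((α i - (i : ℕ) - (j : ℕ) - 2) • eps i)) =
      phiBig m * XZ α) :=
  stmt0_general m α
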